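/- Let λ ≠ 0 and suppose the pair of continuously differentiable functions (p,q) on [0,1] satisfies λ·p(x) = ∫_x^1 q(t) dt and λ·q(x) = ∫_0^x p(t) dt + ∫_x^1 q(t) dt for all x ∈ [0,1]. Then λ = √3 / (2π(k + 1/3)) for some integer k, and p(x) = C·exp(−x/(2λ))·cos(π/6 + (√3/2)·x/λ) for some constant C. -/

import Mathlib

/-!
Differentiating the integral equations gives `λ p' = -q` and `λ q' = p - q`. For the primitive
cube root of unity `ω = cubeRootUnity`, the relation `ω² + ω + 1 = 0` turns this into the scalar
equation `λ f' = ω f` for `f = p + ω q`, so `f x = exp (ω x / λ) f 0`, and `f 0 = (1 + ω) p 0`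
because `q 0 = p 0`. Taking a suitable real part recovers `p` in the stated form, with `p 0 ≠ 0` by
nontriviality; the boundary condition `p 1 = 0` then forces the cosine to vanish at `x = 1`, which
quantizes `λ`.
-/

open Real Set Complex

theorem eq_exp_mul_of_hasDerivWithinAt_Icc {f : ℝ → ℂ} {c : ℂ} {a b : ℝ}
    (hf : ∀ x ∈ Icc a b, HasDerivWithinAt f (c * f x) (Icc a b) x) :
    ∀ x ∈ Icc a b, f x = exp (c * (x - a)) * f a := by
  set g : ℝ → ℂ := fun x => exp (-c * (x - a)) * f x
  have hg : ∀ x ∈ Icc a b, HasDerivWithinAt g 0 (Icc a b) x := by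
    intro x hx
    have hexp : HasDerivWithinAt (fun y : ℝ => exp (-c * (y - a))) (exp (-c * (x - a)) * -c)
        (Icc a b) x := by
      simpa using (((hasDerivWithinAt_id x (Icc a b)).sub_const a).ofReal_comp.const_mul
        (-c)).cexp
    exact (hexp.mul (hf x hx)).congr_deriv (by ring)
  have hconst := constant_of_has_deriv_right_zero
    (fun x hx => (hg x hx).continuousWithinAt)
    (fun x hx => (hg x (Ico_subset_Icc_self hx)).mono_of_mem_nhdsWithin (Icc_mem_nhdsGE_of_mem hx))
  intro x hx
  have hgx : exp (-c * (x - a)) * f x = f a := by simpa [g] using hconst x hx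
  rw [← hgx, ← mul_assoc, ← Complex.exp_add]
  simp

theorem hasDerivWithinAt_setIntegral_Icc_left {f : ℝ → ℝ} {a b x : ℝ}
    (hf : ContinuousOn f (Icc a b)) (hx : x ∈ Icc a b) :
    HasDerivWithinAt (fun u => ∫ t in Icc u b, f t) (-f x) (Icc a b) x := by
  have : Fact (x ∈ Icc a b) := ⟨hx⟩
  have hint : IntervalIntegrable f MeasureTheory.volume x b :=
    (hf.mono (Icc_subset_Icc hx.1 le_rfl)).intervalIntegrable_of_Icc hx.2
  refine (intervalIntegral.integral_hasDerivWithinAt_left hint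
    ⟨Icc a b, self_mem_nhdsWithin, hf.aestronglyMeasurable measurableSet_Icc⟩ (hf x hx)).congr
    (fun y hy => ?_) ?_ <;>
  rw [intervalIntegral.integral_of_le (by grind), MeasureTheory.integral_Icc_eq_integral_Ioc]

theorem hasDerivWithinAt_setIntegral_Icc_right {f : ℝ → ℝ} {a b x : ℝ}
    (hf : ContinuousOn f (Icc a b)) (hx : x ∈ Icc a b) :
    HasDerivWithinAt (fun u => ∫ t in Icc a u, f t) (f x) (Icc a b) x := by
  have : Fact (x ∈ Icc a b) := ⟨hx⟩
  have hint : IntervalIntegrable f MeasureTheory.volume a x :=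
    (hf.mono (Icc_subset_Icc le_rfl hx.2)).intervalIntegrable_of_Icc hx.1
  refine (intervalIntegral.integral_hasDerivWithinAt_right hint
    ⟨Icc a b, self_mem_nhdsWithin, hf.aestronglyMeasurable measurableSet_Icc⟩ (hf x hx)).congr
    (fun y hy => ?_) ?_ <;>
  rw [intervalIntegral.integral_of_le (by grind), MeasureTheory.integral_Icc_eq_integral_Ioc]

noncomputable def cubeRootUnity : ℂ := -1 / 2 + √3 / 2 * I

theorem cubeRootUnity_re : cubeRootUnity.re = -1 / 2 := by simp [cubeRootUnity]

theorem cubeRootUnity_im : cubeRootUnity.im = √3 / 2 := by simp [cubeRootUnity]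

theorem cubeRootUnity_sq_add_add_one : cubeRootUnity ^ 2 + cubeRootUnity + 1 = 0 := by
  have h3 : √3 ^ 2 = 3 := Real.sq_sqrt (by norm_num)
  apply Complex.ext <;> simp [pow_two, cubeRootUnity_re, cubeRootUnity_im] <;> nlinarith

theorem hasDerivWithinAt_ofReal_add_cubeRootUnity_mul {p q : ℝ → ℝ} {lam x : ℝ} {s : Set ℝ}
    (hp : HasDerivWithinAt p (-q x / lam) s x)
    (hq : HasDerivWithinAt q ((p x - q x) / lam) s x) :
    HasDerivWithinAt (fun y => (p y : ℂ) + cubeRootUnity * q y)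
      (cubeRootUnity / lam * (p x + cubeRootUnity * q x)) s x := by
  refine (hp.ofReal_comp.add (hq.ofReal_comp.const_mul cubeRootUnity)).congr_deriv ?_
  push_cast
  linear_combination (-(q x : ℂ) / lam) * cubeRootUnity_sq_add_add_one

theorem ofReal_add_cubeRootUnity_mul_eq_zero {a b : ℝ} (h : (a : ℂ) + cubeRootUnity * b = 0) :
    a = 0 ∧ b = 0 := by
  have hre := congrArg Complex.re h
  have him := congrArg Complex.im h
  simp [cubeRootUnity_re, cubeRootUnity_im] at hre him
  constructor <;> linarith

theorem re_ofReal_add_cubeRootUnity_mul (a b : ℝ) :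
    (((a : ℂ) + cubeRootUnity * b) * (1 - I / √3)).re = a := by
  have h3 : √3 ≠ 0 := by positivity
  simp [cubeRootUnity_re, cubeRootUnity_im]
  field_simp
  ring

/-- The phase `π / 6` and the factor `2 / √3` come from
`(1 + ω) (1 - i / √3) = (2 / √3) e^{iπ/6}`. -/
theorem re_exp_cubeRootUnity_mul (lam c x : ℝ) :
    (exp (cubeRootUnity / lam * x) * ((1 + cubeRootUnity) * c) * (1 - I / √3)).re =
      2 / √3 * c * Real.exp (-x / (2 * lam)) * Real.cos (π / 6 + √3 / 2 * (x / lam)) := by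
  have h3 : √3 ^ 2 = 3 := Real.sq_sqrt (by norm_num)
  have h3' : √3 ≠ 0 := by positivity
  rw [Real.cos_add, Real.cos_pi_div_six, Real.sin_pi_div_six]
  simp [Complex.exp_re, Complex.exp_im, cubeRootUnity_re, cubeRootUnity_im]
  field_simp
  ring_nf
  rw [h3]
  ring

theorem eq_sqrt_three_div_of_cos_eq_zero {lam : ℝ}
    (h : Real.cos (π / 6 + √3 / 2 * (1 / lam)) = 0) :
    ∃ k : ℤ, lam = √3 / (2 * π * ((k : ℝ) + 1 / 3)) := by
  obtain ⟨k, hk⟩ := Real.cos_eq_zero_iff.1 h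
  refine ⟨k, ?_⟩
  have hk3 : (k : ℝ) + 1 / 3 ≠ 0 := by
    intro h0
    have : (3 * k : ℤ) = -1 := by exact_mod_cast (by linarith : (3 : ℝ) * k = -1)
    omega
  have hlam : lam ≠ 0 := by
    rintro rfl
    simp [Real.cos_pi_div_six] at h
  rw [eq_div_iff (by positivity)]
  field_simp at hk
  linarith

section IntegralSystem

variable {lam : ℝ} {p q : ℝ → ℝ}

theorem apply_one_eq_zero_of_mul_eq_setIntegral (hlam : lam ≠ 0)
    (heq1 : ∀ x ∈ Icc (0 : ℝ) 1, lam * p x = ∫ t in Icc x 1, q t) : p 1 = 0 := by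
  simpa [hlam] using heq1 1 (by simp)

theorem apply_zero_eq_of_mul_eq_setIntegral (hlam : lam ≠ 0)
    (heq1 : ∀ x ∈ Icc (0 : ℝ) 1, lam * p x = ∫ t in Icc x 1, q t)
    (heq2 : ∀ x ∈ Icc (0 : ℝ) 1,
      lam * q x = (∫ t in Icc (0 : ℝ) x, p t) + ∫ t in Icc x 1, q t) : q 0 = p 0 := by
  have h2 := heq2 0 (by simp)
  rw [← heq1 0 (by simp)] at h2
  simpa [hlam] using h2

theorem hasDerivWithinAt_of_mul_eq_setIntegral_Icc_left (hlam : lam ≠ 0)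
    (hq : ContinuousOn q (Icc 0 1))
    (heq1 : ∀ x ∈ Icc (0 : ℝ) 1, lam * p x = ∫ t in Icc x 1, q t) :
    ∀ x ∈ Icc (0 : ℝ) 1, HasDerivWithinAt p (-q x / lam) (Icc 0 1) x := by
  have hp : ∀ y ∈ Icc (0 : ℝ) 1, p y = (∫ t in Icc y 1, q t) / lam := fun y hy => by
    rw [← heq1 y hy]; field_simp
  intro x hx
  exact ((hasDerivWithinAt_setIntegral_Icc_left hq hx).div_const lam).congr hp (hp x hx)

theorem hasDerivWithinAt_of_mul_eq_add_setIntegral_Icc (hlam : lam ≠ 0)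
    (hp : ContinuousOn p (Icc 0 1)) (hq : ContinuousOn q (Icc 0 1))
    (heq2 : ∀ x ∈ Icc (0 : ℝ) 1,
      lam * q x = (∫ t in Icc (0 : ℝ) x, p t) + ∫ t in Icc x 1, q t) :
    ∀ x ∈ Icc (0 : ℝ) 1, HasDerivWithinAt q ((p x - q x) / lam) (Icc 0 1) x := by
  have hq' : ∀ y ∈ Icc (0 : ℝ) 1,
      q y = ((∫ t in Icc (0 : ℝ) y, p t) + ∫ t in Icc y 1, q t) / lam := fun y hy => by
    rw [← heq2 y hy]; field_simp
  intro x hx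
  exact (((hasDerivWithinAt_setIntegral_Icc_right hp hx).add
    (hasDerivWithinAt_setIntegral_Icc_left hq hx)).div_const lam).congr hq' (hq' x hx)

end IntegralSystem

theorem eigen_123_system (lam : ℝ) (hlam : lam ≠ 0) (p q : ℝ → ℝ)
    (hp : ContDiffOn ℝ 1 p (Set.Icc 0 1)) (hq : ContDiffOn ℝ 1 q (Set.Icc 0 1))
    (heq1 : ∀ x ∈ Set.Icc (0 : ℝ) 1, lam * p x = ∫ t in Set.Icc x 1, q t)
    (heq2 : ∀ x ∈ Set.Icc (0 : ℝ) 1,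
      lam * q x = (∫ t in Set.Icc (0 : ℝ) x, p t) + ∫ t in Set.Icc x 1, q t)
    (hnontriv : ∃ x ∈ Set.Icc (0 : ℝ) 1, p x ≠ 0 ∨ q x ≠ 0) :
    (∃ k : ℤ, lam = Real.sqrt 3 / (2 * Real.pi * ((k : ℝ) + 1 / 3))) ∧
    ∃ C : ℝ, ∀ x ∈ Set.Icc (0 : ℝ) 1,
      p x = C * Real.exp (-x / (2 * lam)) *
        Real.cos (Real.pi / 6 + Real.sqrt 3 / 2 * (x / lam)) := by
  have hp' := hasDerivWithinAt_of_mul_eq_setIntegral_Icc_left hlam hq.continuousOn heq1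
  have hq' := hasDerivWithinAt_of_mul_eq_add_setIntegral_Icc hlam hp.continuousOn
    hq.continuousOn heq2
  have hf : ∀ x ∈ Icc (0 : ℝ) 1, (p x : ℂ) + cubeRootUnity * q x =
      exp (cubeRootUnity / lam * x) * ((1 + cubeRootUnity) * p 0) := by
    intro x hx
    rw [eq_exp_mul_of_hasDerivWithinAt_Icc
      (fun y hy => hasDerivWithinAt_ofReal_add_cubeRootUnity_mul (hp' y hy) (hq' y hy)) x hx,
      apply_zero_eq_of_mul_eq_setIntegral hlam heq1 heq2]
    rw [ofReal_zero, sub_zero]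
    ring
  have hform : ∀ x ∈ Icc (0 : ℝ) 1,
      p x = 2 / √3 * p 0 * Real.exp (-x / (2 * lam)) * Real.cos (π / 6 + √3 / 2 * (x / lam)) :=
    fun x hx => by
      rw [← re_exp_cubeRootUnity_mul, ← hf x hx, re_ofReal_add_cubeRootUnity_mul]
  have hp0 : p 0 ≠ 0 := by
    intro hp0
    obtain ⟨x, hx, hne⟩ := hnontriv
    have hfx := hf x hx
    rw [hp0, ofReal_zero, mul_zero, mul_zero] at hfx
    obtain ⟨hpx, hqx⟩ := ofReal_add_cubeRootUnity_mul_eq_zero hfx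
    exact hne.elim (absurd hpx) (absurd hqx)
  refine ⟨eq_sqrt_three_div_of_cos_eq_zero ?_, _, hform⟩
  have h1 := hform 1 (by simp)
  rw [apply_one_eq_zero_of_mul_eq_setIntegral hlam heq1] at h1
  simpa [hp0, Real.exp_ne_zero] using h1.symm
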